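/- arXiv:2501.00853 — 2 statements merged into one kernel-verified Lean document; each statement's English description precedes it below -/
import Mathlib

section
/- Let φ be an Orlicz function with conjugate ψ. Then the conjugate of ψ is φ; that is, for every t ∈ [0,∞), ⨆_{s ≥ 0} (t·s − ψ(s)) = φ(t), where the subtraction is truncated subtraction in [0,∞]. -/
/-!
Fenchel–Young gives `φ** ≤ φ`. Conversely, for `c < φ t` it suffices to find a line of slope
`s ≥ 0` through `(t, c)` lying below `φ`, since then `ψ s ≤ t s - c`. Left-continuity gives
`t₁ < t₂ < t` with `c < φ t₁`. If `φ t₂ = ∞`, every steep enough line works. Otherwise `t₁` is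
interior to the effective domain of `φ`, and the left derivative of `φ` at `t₁` is the slope of a
supporting line there, nonnegative because `φ` is monotone.
-/

open scoped ENNReal NNReal
open Set

namespace ConvexOn

variable {S : Set ℝ} {f : ℝ → ℝ} {x y : ℝ}

lemma add_leftDeriv_mul_sub_le (hf : ConvexOn ℝ S f) (hx : x ∈ interior S) (hy : y ∈ S) :
    f x + derivWithin f (Iio x) x * (y - x) ≤ f y := by
  rcases lt_trichotomy y x with hyx | rfl | hxy
  · have h := hf.slope_le_leftDeriv_of_mem_interior hy hx hyx
    rw [slope_def_field, div_le_iff₀ (sub_pos.2 hyx)] at h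
    linarith
  · simp
  · have h := (hf.leftDeriv_le_rightDeriv_of_mem_interior hx).trans
      (hf.rightDeriv_le_slope_of_mem_interior hx hy hxy)
    rw [slope_def_field, le_div_iff₀ (sub_pos.2 hxy)] at h
    linarith

lemma leftDeriv_nonneg (hf : ConvexOn ℝ S f) (hmono : MonotoneOn f S) (hx : x ∈ interior S)
    (hy : y ∈ S) (hyx : y < x) : 0 ≤ derivWithin f (Iio x) x := by
  refine le_trans ?_ (hf.slope_le_leftDeriv_of_mem_interior hy hx hyx)
  rw [slope_def_field]
  exact div_nonneg (sub_nonneg.2 (hmono hy (interior_subset hx) hyx.le)) (sub_nonneg.2 hyx.le)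

end ConvexOn

namespace Orlicz

variable {φ : ℝ≥0 → ℝ≥0∞}

noncomputable def conjugate (φ : ℝ≥0 → ℝ≥0∞) (s : ℝ≥0) : ℝ≥0∞ :=
  ⨆ t : ℝ≥0, (t : ℝ≥0∞) * s - φ t

lemma conjugate_le_iff {s : ℝ≥0} {b : ℝ≥0∞} :
    conjugate φ s ≤ b ↔ ∀ t : ℝ≥0, (t : ℝ≥0∞) * s ≤ b + φ t := by
  simp only [conjugate, iSup_le_iff, tsub_le_iff_right]

lemma mul_le_conjugate_add (t s : ℝ≥0) : (t : ℝ≥0∞) * s ≤ conjugate φ s + φ t :=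
  conjugate_le_iff.1 le_rfl t

lemma conjugate_conjugate_le (t : ℝ≥0) : conjugate (conjugate φ) t ≤ φ t :=
  conjugate_le_iff.2 fun s => by
    rw [mul_comm, add_comm]
    exact mul_le_conjugate_add t s

/-- The line `u ↦ c + s * (u - t)` lies below `φ`, with both sides shifted so that no truncated
subtraction occurs. -/
def AffineMinorant (φ : ℝ≥0 → ℝ≥0∞) (t c s : ℝ≥0) : Prop :=
  ∀ u : ℝ≥0, (u : ℝ≥0∞) * s + c ≤ φ u + t * s

namespace AffineMinorant

variable {t t' c s : ℝ≥0}

lemma mono (h : AffineMinorant φ t c s) (ht : t ≤ t') : AffineMinorant φ t' c s :=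
  fun u => (h u).trans (by gcongr)

lemma le_conjugate_conjugate (h : AffineMinorant φ t c s) (hzero : φ 0 = 0) :
    (c : ℝ≥0∞) ≤ conjugate (conjugate φ) t := by
  have hct : (c : ℝ≥0∞) ≤ t * s := by simpa [hzero] using h 0
  have hψ : conjugate φ s ≤ t * s - c := conjugate_le_iff.2 fun u => by
    rw [ENNReal.cancel_coe.tsub_add_eq_add_tsub hct, add_comm (t * s : ℝ≥0∞)]
    exact ENNReal.le_sub_of_add_le_right ENNReal.coe_ne_top (h u)
  calc (c : ℝ≥0∞) = t * s - (t * s - c) := (ENNReal.sub_sub_cancel (by finiteness) hct).symm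
    _ ≤ s * t - conjugate φ s := by rw [mul_comm (s : ℝ≥0∞)]; gcongr
    _ ≤ conjugate (conjugate φ) t := le_iSup (fun s' : ℝ≥0 => (s' : ℝ≥0∞) * t - conjugate φ s') s

end AffineMinorant

lemma exists_affineMinorant_of_eq_top (hmono : Monotone φ) {t₁ t : ℝ≥0} (ht : t₁ < t)
    (htop : φ t₁ = ⊤) (c : ℝ≥0) : ∃ s, AffineMinorant φ t c s := by
  set s := c / (t - t₁)
  have hslope : t₁ * s + c = t * s := by
    have hcs : (t - t₁) * s = c := mul_div_cancel₀ c (tsub_pos_of_lt ht).ne'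
    rw [← hcs, ← add_mul, add_tsub_cancel_of_le ht.le]
  refine ⟨s, fun u => ?_⟩
  rcases le_or_gt u t₁ with hu | hu
  · calc (u : ℝ≥0∞) * s + c ≤ ↑(t₁ * s + c) := by push_cast; gcongr
      _ ≤ φ u + t * s := by rw [hslope]; push_cast; exact le_add_self
  · simp [top_le_iff.1 (htop ▸ hmono hu.le)]

lemma convexOn_toReal
    (hconv : ∀ a b u v : ℝ≥0, u + v = 1 →
      φ (u * a + v * b) ≤ (u : ℝ≥0∞) * φ a + (v : ℝ≥0∞) * φ b) :
    ConvexOn ℝ {x : ℝ | 0 ≤ x ∧ φ x.toNNReal ≠ ⊤} (fun x => (φ x.toNNReal).toReal) := by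
  have key : ∀ ⦃x y a b : ℝ⦄, 0 ≤ x → 0 ≤ y → 0 ≤ a → 0 ≤ b → a + b = 1 →
      φ (a • x + b • y).toNNReal ≤ a.toNNReal * φ x.toNNReal + b.toNNReal * φ y.toNNReal := by
    intro x y a b hx hy ha hb hab
    rw [smul_eq_mul, smul_eq_mul, Real.toNNReal_add (by positivity) (by positivity),
      Real.toNNReal_mul ha, Real.toNNReal_mul hb]
    exact hconv _ _ _ _ (by rw [← Real.toNNReal_add ha hb, hab, Real.toNNReal_one])
  refine ⟨fun x ⟨hx, hxt⟩ y ⟨hy, hyt⟩ a b ha hb hab => ⟨by positivity, ?_⟩,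
    fun x ⟨hx, hxt⟩ y ⟨hy, hyt⟩ a b ha hb hab => ?_⟩
  · exact ne_top_of_le_ne_top (by finiteness) (key hx hy ha hb hab)
  · have := ENNReal.toReal_mono (by finiteness) (key hx hy ha hb hab)
    rwa [ENNReal.toReal_add (by finiteness) (by finiteness), ENNReal.toReal_mul,
      ENNReal.toReal_mul, ENNReal.coe_toReal, ENNReal.coe_toReal, Real.coe_toNNReal _ ha,
      Real.coe_toNNReal _ hb] at this

lemma exists_affineMinorant_of_ne_top (hmono : Monotone φ)
    (hconv : ∀ a b u v : ℝ≥0, u + v = 1 →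
      φ (u * a + v * b) ≤ (u : ℝ≥0∞) * φ a + (v : ℝ≥0∞) * φ b)
    {t₁ t₂ c : ℝ≥0} (h₀ : 0 < t₁) (h₁₂ : t₁ < t₂) (htop : φ t₂ ≠ ⊤) (hc : c ≤ φ t₁) :
    ∃ s, AffineMinorant φ t₁ c s := by
  set S := {x : ℝ | 0 ≤ x ∧ φ x.toNNReal ≠ ⊤}
  set f := fun x : ℝ => (φ x.toNNReal).toReal
  have hf : ConvexOn ℝ S f := convexOn_toReal hconv
  have hfin : ∀ u : ℝ≥0, u ≤ t₂ → φ u ≠ ⊤ := fun u hu => ne_top_of_le_ne_top htop (hmono hu)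
  have hint : (t₁ : ℝ) ∈ interior S := by
    refine mem_interior_iff_mem_nhds.2 (Filter.mem_of_superset (Ioo_mem_nhds h₀ h₁₂) ?_)
    exact fun x hx => ⟨hx.1.le, hfin _ (Real.toNNReal_le_iff_le_coe.2 hx.2.le)⟩
  have hmonoS : MonotoneOn f S := fun x _ y hy hxy =>
    ENNReal.toReal_mono hy.2 (hmono (Real.toNNReal_le_toNNReal hxy))
  have hL : 0 ≤ derivWithin f (Iio t₁) t₁ :=
    hf.leftDeriv_nonneg hmonoS hint ⟨le_rfl, by simpa using hfin 0 zero_le⟩ (by exact_mod_cast h₀)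
  refine ⟨(derivWithin f (Iio t₁) t₁).toNNReal, fun u => ?_⟩
  by_cases hu : φ u = ⊤
  · simp [hu]
  have hsupp := hf.add_leftDeriv_mul_sub_le hint (y := u) ⟨u.2, by simpa using hu⟩
  simp only [f, Real.toNNReal_coe] at hsupp
  have hc' : (c : ℝ) ≤ (φ t₁).toReal := ENNReal.toReal_mono (hfin t₁ h₁₂.le) hc
  rw [← ENNReal.coe_toNNReal hu]
  norm_cast
  rw [← NNReal.coe_le_coe]
  push_cast [Real.coe_toNNReal _ hL, ENNReal.coe_toNNReal_eq_toReal]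
  linarith

lemma exists_affineMinorant_of_lt (hzero : φ 0 = 0) (hmono : Monotone φ)
    (hconv : ∀ a b u v : ℝ≥0, u + v = 1 →
      φ (u * a + v * b) ≤ (u : ℝ≥0∞) * φ a + (v : ℝ≥0∞) * φ b)
    (hlc : ∀ t₀ : ℝ≥0, ContinuousWithinAt φ (Iio t₀) t₀) {t c : ℝ≥0} (hc : c < φ t) :
    ∃ s, AffineMinorant φ t c s := by
  have pos_of_lt {t' : ℝ≥0} (h : c < φ t') : 0 < t' :=
    pos_iff_ne_zero.2 (by rintro rfl; simp [hzero] at h)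
  have := nhdsLT_neBot_of_exists_lt ⟨0, pos_of_lt hc⟩
  obtain ⟨t₁, hct₁, ht₁⟩ :=
    (((hlc t).eventually (eventually_gt_nhds hc)).and self_mem_nhdsWithin).exists
  obtain ⟨t₂, h₁₂, h₂⟩ := exists_between ht₁
  by_cases htop : φ t₂ = ⊤
  · exact exists_affineMinorant_of_eq_top hmono h₂ htop c
  · obtain ⟨s, hs⟩ := exists_affineMinorant_of_ne_top hmono hconv (pos_of_lt hct₁) h₁₂ htop hct₁.le
    exact ⟨s, hs.mono ht₁.le⟩

end Orlicz

theorem biconjugate_of_orlicz_general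
    (φ : ℝ≥0 → ℝ≥0∞)
    (hzero : φ 0 = 0)
    (hmono : Monotone φ)
    (hconv : ∀ a b u v : ℝ≥0, u + v = 1 →
      φ (u * a + v * b) ≤ (u : ℝ≥0∞) * φ a + (v : ℝ≥0∞) * φ b)
    (hlc : ∀ t₀ : ℝ≥0, ContinuousWithinAt φ (Set.Iio t₀) t₀)
    (ψ : ℝ≥0 → ℝ≥0∞)
    (hψ : ∀ s : ℝ≥0, ψ s = ⨆ t : ℝ≥0, ((t : ℝ≥0∞) * (s : ℝ≥0∞) - φ t)) :
    ∀ t : ℝ≥0, (⨆ s : ℝ≥0, ((t : ℝ≥0∞) * (s : ℝ≥0∞) - ψ s)) = φ t := by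
  intro t
  have hψφ : ψ = Orlicz.conjugate φ := funext hψ
  calc (⨆ s : ℝ≥0, (t : ℝ≥0∞) * s - ψ s) = Orlicz.conjugate (Orlicz.conjugate φ) t := by
        simp only [Orlicz.conjugate, hψφ, mul_comm]
    _ = φ t := by
      refine le_antisymm (Orlicz.conjugate_conjugate_le t)
        (ENNReal.le_of_forall_nnreal_lt fun c hc => ?_)
      obtain ⟨s, hs⟩ := Orlicz.exists_affineMinorant_of_lt hzero hmono hconv hlc hc
      exact hs.le_conjugate_conjugate hzero

/-- the conjugate of the conjugate of an Orlicz function φ is φ itself. -/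
theorem biconjugate_of_orlicz
    (φ : ℝ≥0 → ℝ≥0∞)
    (hzero : φ 0 = 0)
    (hmono : Monotone φ)
    (hconv : ∀ a b u v : ℝ≥0, u + v = 1 →
      φ (u * a + v * b) ≤ (u : ℝ≥0∞) * φ a + (v : ℝ≥0∞) * φ b)
    (hlc : ∀ t₀ : ℝ≥0, ContinuousWithinAt φ (Set.Iio t₀) t₀)
    (hnt₁ : ∃ a : ℝ≥0, 0 < a ∧ 0 < φ a)
    (hnt₂ : ∃ b : ℝ≥0, 0 < b ∧ φ b < ⊤)
    (ψ : ℝ≥0 → ℝ≥0∞)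
    (hψ : ∀ s : ℝ≥0, ψ s = ⨆ t : ℝ≥0, ((t : ℝ≥0∞) * (s : ℝ≥0∞) - φ t)) :
    ∀ t : ℝ≥0, (⨆ s : ℝ≥0, ((t : ℝ≥0∞) * (s : ℝ≥0∞) - ψ s)) = φ t :=
  biconjugate_of_orlicz_general φ hzero hmono hconv hlc ψ hψ
end

section
/- Let (Ω, ℱ, P) be a probability space, Φ a random Orlicz function, and let Ψ be its random conjugate, i.e. for each s ∈ L⁰₊(ℱ), Ψ(s) is the almost-everywhere least upper bound of the family { t·s ∸ Φ(t) : t ∈ L⁰₊(ℱ) } (truncated subtraction in [0,∞]). Then the random conjugate of Ψ is Φ: for every t ∈ L⁰₊(ℱ), the almost-everywhere least upper bound of the family { t·s ∸ Ψ(s) : s ∈ L⁰₊(ℱ) } exists and equals Φ(t) almost everywhere. -/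
open scoped ENNReal NNReal
open MeasureTheory Filter

/-- A random Orlicz function on the probability space `(Ω, ℱ, P)`: a map from
(classes of) nonnegative random variables to (classes of) `[0,∞]`-valued random
variables which is well defined on a.e.-classes, vanishes at `0`, is left-continuous
(for convergence in probability), increasing, `L⁰(ℱ)`-convex and nontrivial. -/
def IsRandomOrlicz {Ω : Type*} [MeasurableSpace Ω] (P : Measure Ω)
    (Φ : (Ω → ℝ≥0) → Ω → ℝ≥0∞) : Prop :=
  (∀ t₁ t₂ : Ω → ℝ≥0, Measurable t₁ → Measurable t₂ → t₁ =ᵐ[P] t₂ →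
    Φ t₁ =ᵐ[P] Φ t₂) ∧
  (∀ t : Ω → ℝ≥0, Measurable t → AEMeasurable (Φ t) P) ∧
  Φ 0 =ᵐ[P] 0 ∧
  (∀ t₀ : Ω → ℝ≥0, Measurable t₀ → ∀ ts : ℕ → Ω → ℝ≥0,
    (∀ n, Measurable (ts n)) → (∀ n, ts n ≤ᵐ[P] ts (n + 1)) →
    (∀ n, ts n ≤ᵐ[P] t₀) → TendstoInMeasure P ts atTop t₀ →
    ∀ ε : ℝ≥0∞, 0 < ε →
      Tendsto (fun n => P {ω | ε ≤ max (Φ (ts n) ω - Φ t₀ ω) (Φ t₀ ω - Φ (ts n) ω)})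
        atTop (nhds 0)) ∧
  (∀ t₁ t₂ : Ω → ℝ≥0, Measurable t₁ → Measurable t₂ → t₁ ≤ᵐ[P] t₂ →
    Φ t₁ ≤ᵐ[P] Φ t₂) ∧
  (∀ ζ : Ω → ℝ≥0, Measurable ζ → (∀ᵐ ω ∂P, ζ ω ≤ 1) →
    ∀ t₁ t₂ : Ω → ℝ≥0, Measurable t₁ → Measurable t₂ →
      Φ (fun ω => ζ ω * t₁ ω + (1 - ζ ω) * t₂ ω) ≤ᵐ[P]
        fun ω => (ζ ω : ℝ≥0∞) * Φ t₁ ω + ((1 - ζ ω : ℝ≥0) : ℝ≥0∞) * Φ t₂ ω) ∧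
  (∃ t : Ω → ℝ≥0, Measurable t ∧ (∀ᵐ ω ∂P, 0 < t ω) ∧
    ∀ᵐ ω ∂P, 0 < Φ t ω ∧ Φ t ω < ⊤)

/-- `u` is the a.e. least upper bound of the family `{ t·s ∸ Φ(t) : t ∈ L⁰₊(ℱ) }`,
i.e. a version of the random conjugate `Ψ(s)` of `Φ` at `s`. -/
def IsAERandomConjugateAt {Ω : Type*} [MeasurableSpace Ω] (P : Measure Ω)
    (Φ : (Ω → ℝ≥0) → Ω → ℝ≥0∞) (s : Ω → ℝ≥0) (u : Ω → ℝ≥0∞) : Prop :=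
  AEMeasurable u P ∧
  (∀ t : Ω → ℝ≥0, Measurable t →
    (fun ω => ((t ω * s ω : ℝ≥0) : ℝ≥0∞) - Φ t ω) ≤ᵐ[P] u) ∧
  (∀ v : Ω → ℝ≥0∞, AEMeasurable v P →
    (∀ t : Ω → ℝ≥0, Measurable t →
      (fun ω => ((t ω * s ω : ℝ≥0) : ℝ≥0∞) - Φ t ω) ≤ᵐ[P] v) →
    u ≤ᵐ[P] v)

/-!
Young's inequality `t s ≤ Φ(t) + Ψ(s)` makes `Φ(t)` an upper bound of the family. For
minimality let `v` be another upper bound and fix `0 ≤ r < q < 1`. Where `Φ(q t) < ∞`, let `s`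
be the slope of the chord of `Φ` between `r t` and `q t`: convexity puts `Φ` above this chord
outside `[r t, q t]`, and monotonicity puts it above `Φ(r t)` inside, so
`Φ(t') ≥ Φ(r t) + s (t' - q t)` for all `t'`. Hence `Ψ(s) ≤ s q t - Φ(r t)` and
`v ≥ s t - Ψ(s) ≥ Φ(r t)`. Where `Φ(q t) = ∞`, the slopes `n / (t - q t)` give `v ≥ n` for
every `n`. Finally `Φ(r t) → Φ(t)` in probability as `r ↑ 1`, by left continuity.
-/

theorem NNReal.convex_weight_spec {a x b : ℝ≥0} (hax : a ≤ x) (hxb : x ≤ b) :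
    (b - x) / (b - a) ≤ 1 ∧ (b - x) / (b - a) * a + (1 - (b - x) / (b - a)) * b = x ∧
      (b - x) / (b - a) * (b - a) = b - x ∧ (1 - (b - x) / (b - a)) * (b - a) = x - a := by
  rcases (hax.trans hxb).eq_or_lt with rfl | hab
  · obtain rfl := le_antisymm hxb hax
    simp
  have hle : (b - x) / (b - a) ≤ 1 := div_le_one_of_le₀ (tsub_le_tsub_left hax b) zero_le
  have hba : (b : ℝ) - a ≠ 0 := sub_ne_zero.2 (NNReal.coe_injective.ne hab.ne')
  refine ⟨hle, ?_, ?_, ?_⟩ <;> rw [← NNReal.coe_inj] <;>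
    push_cast [NNReal.coe_sub hle, NNReal.coe_sub hxb, NNReal.coe_sub hax,
      NNReal.coe_sub hab.le] <;>
    field_simp <;> ring

-- The conclusion reads `fx ≥ fa + s (x - b)`, stated additively since `ℝ≥0∞` subtraction truncates.
theorem ENNReal.mul_add_le_add_mul_of_chord {a b x s : ℝ≥0} {fa fb fx : ℝ≥0∞} (hab : a < b)
    (hfa : fa ≠ ⊤) (hslope : (s * (b - a) : ℝ≥0) + fa = fb)
    (hright : b ≤ x → ((x - a : ℝ≥0) : ℝ≥0∞) * fb ≤
      ((x - b : ℝ≥0) : ℝ≥0∞) * fa + ((b - a : ℝ≥0) : ℝ≥0∞) * fx)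
    (hleft : x ≤ a → ((b - x : ℝ≥0) : ℝ≥0∞) * fa ≤
      ((b - a : ℝ≥0) : ℝ≥0∞) * fx + ((a - x : ℝ≥0) : ℝ≥0∞) * fb)
    (hmid : a ≤ x → fa ≤ fx) :
    ((x * s : ℝ≥0) : ℝ≥0∞) + fa ≤ fx + (s * b : ℝ≥0) := by
  rcases eq_or_ne fx ⊤ with rfl | hfx
  · simp
  lift fa to ℝ≥0 using hfa
  lift fx to ℝ≥0 using hfx
  subst hslope
  norm_cast at hright hleft hmid ⊢
  have hab' : (a : ℝ) < b := hab
  rw [← NNReal.coe_le_coe]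
  rcases le_total b x with hbx | hxb
  · have h := NNReal.coe_le_coe.2 (hright hbx)
    push_cast [NNReal.coe_sub hbx, NNReal.coe_sub hab.le, NNReal.coe_sub (hab.le.trans hbx)] at h ⊢
    have : (x - a) * s + fa ≤ (fx : ℝ) :=
      le_of_mul_le_mul_left (by linarith) (sub_pos.2 hab')
    nlinarith [mul_le_mul_of_nonneg_left hab'.le s.2]
  rcases le_total x a with hxa | hax
  · have h := NNReal.coe_le_coe.2 (hleft hxa)
    push_cast [NNReal.coe_sub hxa, NNReal.coe_sub hab.le, NNReal.coe_sub (hxa.trans hab.le)] at h ⊢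
    have : (fa : ℝ) ≤ fx + (a - x) * s :=
      le_of_mul_le_mul_left (by linarith) (sub_pos.2 hab')
    nlinarith [mul_le_mul_of_nonneg_left hab'.le s.2]
  · have h := NNReal.coe_le_coe.2 (hmid hax)
    push_cast
    nlinarith [s.2, NNReal.coe_le_coe.2 hxb]

theorem MeasureTheory.ae_le_of_tendsto_of_forall_ae_le {α : Type*} [MeasurableSpace α]
    {μ : Measure α} {f : ℕ → α → ℝ≥0∞} {g v : α → ℝ≥0∞} (hf : ∀ n, f n ≤ᵐ[μ] v)
    (hlim : ∀ ε : ℝ≥0∞, 0 < ε →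
      Tendsto (fun n => μ {ω | ε ≤ max (f n ω - g ω) (g ω - f n ω)}) atTop (nhds 0)) :
    g ≤ᵐ[μ] v := by
  have hsmall : ∀ ε : ℝ≥0∞, 0 < ε → ∀ᵐ ω ∂μ, g ω - v ω < ε := fun ε hε => by
    refine ae_iff.2 (le_antisymm (ge_of_tendsto' (hlim ε hε) fun n => measure_mono_ae ?_) zero_le)
    filter_upwards [hf n] with ω hω hmem
    exact le_max_of_le_right ((not_lt.1 hmem).trans (tsub_le_tsub_left hω _))
  filter_upwards [ae_all_iff.2 fun n : ℕ =>
    hsmall (n : ℝ≥0∞)⁻¹ (ENNReal.inv_pos.2 (ENNReal.natCast_ne_top n))] with ω hω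
  exact tsub_eq_zero_iff_le.1 (le_antisymm
    (ge_of_tendsto' ENNReal.tendsto_inv_nat_nhds_zero fun n => (hω n).le) zero_le)

theorem IsAERandomConjugateAt.ae_le_of_forall_ae_le {Ω : Type*} [MeasurableSpace Ω]
    {P : Measure Ω} {Φ : (Ω → ℝ≥0) → Ω → ℝ≥0∞} {s : Ω → ℝ≥0} {u : Ω → ℝ≥0∞}
    (h : IsAERandomConjugateAt P Φ s u) {A : Set Ω} (hA : MeasurableSet A) {d : Ω → ℝ≥0∞}
    (hd : Measurable d)
    (hbound : ∀ t : Ω → ℝ≥0, Measurable t →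
      ∀ᵐ ω ∂P, ω ∈ A → ((t ω * s ω : ℝ≥0) : ℝ≥0∞) - Φ t ω ≤ d ω) :
    ∀ᵐ ω ∂P, ω ∈ A → u ω ≤ d ω := by
  classical
  have hle := h.2.2 (A.piecewise d ⊤) (hd.piecewise hA measurable_const).aemeasurable
    fun t ht => by
      filter_upwards [hbound t ht] with ω hω
      by_cases hωA : ω ∈ A
      · simpa [hωA] using hω hωA
      · simp [hωA]
  filter_upwards [hle] with ω hω hωA
  simpa [hωA] using hω

namespace IsRandomOrlicz

variable {Ω : Type*} [MeasurableSpace Ω] {P : Measure Ω} {Φ Ψ : (Ω → ℝ≥0) → Ω → ℝ≥0∞}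

theorem ae_le_of_eqOn (hΦ : IsRandomOrlicz P Φ) {A : Set Ω} (hA : MeasurableSet A)
    {u w : Ω → ℝ≥0} (hu : Measurable u) (hw : Measurable w) (h : Set.EqOn u w A) :
    ∀ᵐ ω ∂P, ω ∈ A → Φ u ω ≤ Φ w ω := by
  -- convexity with `ζ = 1_A`: the combination `ζ w + (1 - ζ) u` is `u` itself, as `u = w` on `A`
  have hconv := hΦ.2.2.2.2.2.1 (A.indicator 1) (measurable_one.indicator hA)
    (.of_forall fun ω => Set.indicator_apply_le' (fun _ => le_rfl) (fun _ => zero_le_one)) w u hw hu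
  have hcomb : (fun ω => A.indicator 1 ω * w ω + (1 - A.indicator 1 ω) * u ω) = u := by
    funext ω
    by_cases hω : ω ∈ A
    · simp [hω, h hω]
    · simp [hω]
  rw [hcomb] at hconv
  filter_upwards [hconv] with ω hω hωA
  simpa [hωA] using hω

theorem ae_le_of_le (hΦ : IsRandomOrlicz P Φ) {u w : Ω → ℝ≥0} (hu : Measurable u)
    (hw : Measurable w) : ∀ᵐ ω ∂P, u ω ≤ w ω → Φ u ω ≤ Φ w ω := by
  have hmax : Measurable (u ⊔ w) := hu.sup hw
  filter_upwards [hΦ.2.2.2.2.1 u (u ⊔ w) hu hmax (.of_forall fun ω => le_sup_left),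
    hΦ.ae_le_of_eqOn (measurableSet_le hu hw) hmax hw fun ω (h : u ω ≤ w ω) => sup_of_le_right h]
    with ω h₁ h₂ hle
  exact h₁.trans (h₂ hle)

theorem ae_sub_mul_le (hΦ : IsRandomOrlicz P Φ) {t₁ p t₂ : Ω → ℝ≥0} (h₁ : Measurable t₁)
    (hp : Measurable p) (h₂ : Measurable t₂) :
    ∀ᵐ ω ∂P, t₁ ω ≤ p ω → p ω ≤ t₂ ω →
      ((t₂ ω - t₁ ω : ℝ≥0) : ℝ≥0∞) * Φ p ω ≤
        ((t₂ ω - p ω : ℝ≥0) : ℝ≥0∞) * Φ t₁ ω + ((p ω - t₁ ω : ℝ≥0) : ℝ≥0∞) * Φ t₂ ω := by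
  set ζ : Ω → ℝ≥0 := fun ω => min ((t₂ ω - p ω) / (t₂ ω - t₁ ω)) 1
  have hζ : Measurable ζ := ((h₂.sub hp).div (h₂.sub h₁)).min measurable_const
  have hA : MeasurableSet ({ω | t₁ ω ≤ p ω} ∩ {ω | p ω ≤ t₂ ω}) :=
    (measurableSet_le h₁ hp).inter (measurableSet_le hp h₂)
  have hζ_eq : ∀ ω, t₁ ω ≤ p ω → p ω ≤ t₂ ω → ζ ω = (t₂ ω - p ω) / (t₂ ω - t₁ ω) :=
    fun ω hl hr => min_eq_left (NNReal.convex_weight_spec hl hr).1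
  have hloc := hΦ.ae_le_of_eqOn (w := fun ω => ζ ω * t₁ ω + (1 - ζ ω) * t₂ ω) hA hp
    ((hζ.mul h₁).add ((measurable_const.sub hζ).mul h₂)) fun ω ⟨hl, hr⟩ => by
      beta_reduce
      rw [hζ_eq ω hl hr, (NNReal.convex_weight_spec hl hr).2.1]
  filter_upwards [hloc, hΦ.2.2.2.2.2.1 ζ hζ (.of_forall fun ω => min_le_right _ _) t₁ t₂ h₁ h₂]
    with ω hωloc hωconv hl hr
  obtain ⟨-, -, hw₁, hw₂⟩ := NNReal.convex_weight_spec hl hr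
  calc ((t₂ ω - t₁ ω : ℝ≥0) : ℝ≥0∞) * Φ p ω
      ≤ ((t₂ ω - t₁ ω : ℝ≥0) : ℝ≥0∞) *
          ((ζ ω : ℝ≥0∞) * Φ t₁ ω + ((1 - ζ ω : ℝ≥0) : ℝ≥0∞) * Φ t₂ ω) := by
        gcongr
        exact (hωloc ⟨hl, hr⟩).trans hωconv
    _ = ((ζ ω * (t₂ ω - t₁ ω) : ℝ≥0) : ℝ≥0∞) * Φ t₁ ω +
          (((1 - ζ ω) * (t₂ ω - t₁ ω) : ℝ≥0) : ℝ≥0∞) * Φ t₂ ω := by push_cast; ring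
    _ = _ := by rw [hζ_eq ω hl hr, hw₁, hw₂]

theorem ae_mul_add_le_add_mul (hΦ : IsRandomOrlicz P Φ) {a b t' : Ω → ℝ≥0} (ha : Measurable a)
    (hb : Measurable b) (ht' : Measurable t') (s : Ω → ℝ≥0) :
    ∀ᵐ ω ∂P, a ω < b ω → Φ a ω ≠ ⊤ → ((s ω * (b ω - a ω) : ℝ≥0) : ℝ≥0∞) + Φ a ω = Φ b ω →
      ((t' ω * s ω : ℝ≥0) : ℝ≥0∞) + Φ a ω ≤ Φ t' ω + (s ω * b ω : ℝ≥0) := by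
  filter_upwards [hΦ.ae_sub_mul_le ha hb ht', hΦ.ae_sub_mul_le ht' ha hb, hΦ.ae_le_of_le ha ht']
    with ω hright hleft hmid hab hfa hslope
  exact ENNReal.mul_add_le_add_mul_of_chord hab hfa hslope (hright hab.le) (hleft · hab.le) hmid

theorem ae_apply_le_of_supporting_line (hΦ : IsRandomOrlicz P Φ)
    (hΨ : ∀ s : Ω → ℝ≥0, Measurable s → IsAERandomConjugateAt P Φ s (Ψ s)) {t : Ω → ℝ≥0}
    {v : Ω → ℝ≥0∞}
    (hv : ∀ s : Ω → ℝ≥0, Measurable s →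
      (fun ω => ((s ω * t ω : ℝ≥0) : ℝ≥0∞) - Ψ s ω) ≤ᵐ[P] v)
    {a b s : Ω → ℝ≥0} (ha : Measurable a) (hb : Measurable b) (hs : Measurable s) (hbt : b ≤ t)
    {G : Set Ω} (hG : MeasurableSet G) (hfin : ∀ᵐ ω ∂P, ω ∈ G → Φ a ω ≠ ⊤)
    (hsupport : ∀ t' : Ω → ℝ≥0, Measurable t' → ∀ᵐ ω ∂P, ω ∈ G →
      ((t' ω * s ω : ℝ≥0) : ℝ≥0∞) + Φ a ω ≤ Φ t' ω + (s ω * b ω : ℝ≥0)) :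
    ∀ᵐ ω ∂P, ω ∈ G → Φ a ω ≤ v ω := by
  obtain ⟨Fa, hFa, hFa_eq⟩ := hΦ.2.1 a ha
  have hΨs := (hΨ s hs).ae_le_of_forall_ae_le (d := fun ω => (s ω * b ω : ℝ≥0) - Fa ω) hG
    ((hs.mul hb).coe_nnreal_ennreal.sub hFa) fun t' ht' => by
      filter_upwards [hsupport t' ht', hfin, hFa_eq] with ω h hfa ea hωG
      rw [← ea, tsub_le_iff_right]
      exact (ENNReal.le_sub_of_add_le_right (hfa hωG) (h hωG)).trans
        (add_tsub_le_assoc.trans_eq (add_comm _ _))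
  have hintercept : ∀ᵐ ω ∂P, ω ∈ G → Φ a ω ≤ (s ω * b ω : ℝ≥0) := by
    filter_upwards [hsupport 0 measurable_const, hΦ.2.2.1] with ω h h0 hωG
    simpa [h0] using h hωG
  filter_upwards [hΨs, hv s hs, hintercept, hFa_eq] with ω hΨω hvω hint ea hωG
  calc Φ a ω = (s ω * b ω : ℝ≥0) - ((s ω * b ω : ℝ≥0) - Φ a ω) :=
        (ENNReal.sub_sub_cancel ENNReal.coe_ne_top (hint hωG)).symm
    _ ≤ (s ω * t ω : ℝ≥0) - Ψ s ω := by
        rw [ea]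
        gcongr
        · exact hbt ω
        · exact hΨω hωG
    _ ≤ v ω := hvω

theorem ae_apply_le_of_lt_of_ne_top (hΦ : IsRandomOrlicz P Φ)
    (hΨ : ∀ s : Ω → ℝ≥0, Measurable s → IsAERandomConjugateAt P Φ s (Ψ s)) {t : Ω → ℝ≥0}
    {v : Ω → ℝ≥0∞}
    (hv : ∀ s : Ω → ℝ≥0, Measurable s →
      (fun ω => ((s ω * t ω : ℝ≥0) : ℝ≥0∞) - Ψ s ω) ≤ᵐ[P] v)
    {a b : Ω → ℝ≥0} (ha : Measurable a) (hb : Measurable b) (hbt : b ≤ t) :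
    ∀ᵐ ω ∂P, a ω < b ω → Φ b ω ≠ ⊤ → Φ a ω ≤ v ω := by
  obtain ⟨Fa, hFa, hFa_eq⟩ := hΦ.2.1 a ha
  obtain ⟨Fb, hFb, hFb_eq⟩ := hΦ.2.1 b hb
  set G := {ω | a ω < b ω} ∩ {ω | Fb ω ≠ ⊤}
  have hG : MeasurableSet G :=
    (measurableSet_lt ha hb).inter (hFb (measurableSet_singleton ⊤)).compl
  set s : Ω → ℝ≥0 := fun ω => ((Fb ω - Fa ω) / (b ω - a ω : ℝ≥0)).toNNReal
  have hs : Measurable s :=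
    ((hFb.sub hFa).div (hb.sub ha).coe_nnreal_ennreal).ennreal_toNNReal
  have hle_ne_top : ∀ᵐ ω ∂P, ω ∈ G → Φ a ω ≤ Φ b ω ∧ Φ b ω ≠ ⊤ := by
    filter_upwards [hΦ.ae_le_of_le ha hb, hFb_eq] with ω hle eb hωG
    exact ⟨hle hωG.1.le, eb ▸ hωG.2⟩
  have hfin : ∀ᵐ ω ∂P, ω ∈ G → Φ a ω ≠ ⊤ := by
    filter_upwards [hle_ne_top] with ω h hωG
    exact ne_top_of_le_ne_top (h hωG).2 (h hωG).1
  have hslope : ∀ᵐ ω ∂P, ω ∈ G →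
      ((s ω * (b ω - a ω) : ℝ≥0) : ℝ≥0∞) + Φ a ω = Φ b ω := by
    filter_upwards [hle_ne_top, hFa_eq, hFb_eq] with ω h ea eb hωG
    obtain ⟨hle, hne⟩ := h hωG
    have hd : ((b ω - a ω : ℝ≥0) : ℝ≥0∞) ≠ 0 :=
      ENNReal.coe_ne_zero.2 (tsub_pos_of_lt hωG.1).ne'
    rw [ENNReal.coe_mul, ENNReal.coe_toNNReal, ← ea, ← eb,
      ENNReal.div_mul_cancel hd ENNReal.coe_ne_top, tsub_add_cancel_of_le hle]
    exact ENNReal.div_ne_top (ea ▸ eb ▸ ne_top_of_le_ne_top hne tsub_le_self) hd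
  have hle := hΦ.ae_apply_le_of_supporting_line hΨ hv ha hb hs hbt hG hfin fun t' ht' => by
    filter_upwards [hΦ.ae_mul_add_le_add_mul ha hb ht' s, hfin, hslope] with ω h hfa hωs hωG
    exact h hωG.1 (hfa hωG) (hωs hωG)
  filter_upwards [hle, hFb_eq] with ω h eb hab hne
  exact h ⟨hab, show Fb ω ≠ ⊤ by rwa [← eb]⟩

theorem ae_eq_top_of_lt_of_eq_top (hΦ : IsRandomOrlicz P Φ)
    (hΨ : ∀ s : Ω → ℝ≥0, Measurable s → IsAERandomConjugateAt P Φ s (Ψ s)) {t : Ω → ℝ≥0}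
    (ht : Measurable t) {v : Ω → ℝ≥0∞}
    (hv : ∀ s : Ω → ℝ≥0, Measurable s →
      (fun ω => ((s ω * t ω : ℝ≥0) : ℝ≥0∞) - Ψ s ω) ≤ᵐ[P] v)
    {b : Ω → ℝ≥0} (hb : Measurable b) :
    ∀ᵐ ω ∂P, b ω < t ω → Φ b ω = ⊤ → v ω = ⊤ := by
  obtain ⟨Fb, hFb, hFb_eq⟩ := hΦ.2.1 b hb
  set C := {ω | b ω < t ω} ∩ {ω | Fb ω = ⊤}
  have hC : MeasurableSet C := (measurableSet_lt hb ht).inter (hFb (measurableSet_singleton ⊤))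
  have hn : ∀ n : ℕ, ∀ᵐ ω ∂P, ω ∈ C → (n : ℝ≥0∞) ≤ v ω := fun n => by
    set s : Ω → ℝ≥0 := fun ω => n / (t ω - b ω)
    have hs : Measurable s := measurable_const.div (ht.sub hb)
    have hΨs := (hΨ s hs).ae_le_of_forall_ae_le (d := fun ω => (b ω * s ω : ℝ≥0)) hC
      (hb.mul hs).coe_nnreal_ennreal fun t' ht' => by
        filter_upwards [hΦ.ae_le_of_le hb ht', hFb_eq] with ω hmono eb hωC
        rcases le_total (b ω) (t' ω) with h | h
        · have hbtop : Φ b ω = ⊤ := eb.trans hωC.2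
          have : Φ t' ω = ⊤ := top_le_iff.1 (hbtop ▸ hmono h)
          simp [this]
        · exact tsub_le_self.trans (ENNReal.coe_le_coe.2 (mul_le_mul_left h _))
    filter_upwards [hΨs, hv s hs] with ω hΨω hvω hωC
    calc (n : ℝ≥0∞) = (s ω * t ω : ℝ≥0) - (b ω * s ω : ℝ≥0) := by
          rw [← ENNReal.coe_sub, mul_comm (b ω), ← mul_tsub,
            div_mul_cancel₀ _ (tsub_pos_of_lt hωC.1).ne', ENNReal.coe_natCast]
      _ ≤ (s ω * t ω : ℝ≥0) - Ψ s ω := tsub_le_tsub_left (hΨω hωC) _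
      _ ≤ v ω := hvω
  filter_upwards [ae_all_iff.2 hn, hFb_eq] with ω hnω eb hbt htop
  refine ENNReal.eq_top_of_forall_nnreal_le fun r => ?_
  calc (r : ℝ≥0∞) ≤ (⌈r⌉₊ : ℝ≥0∞) := by exact_mod_cast Nat.le_ceil r
    _ ≤ v ω := hnω _ ⟨hbt, show Fb ω = ⊤ by rwa [← eb]⟩

theorem ae_apply_const_mul_le (hΦ : IsRandomOrlicz P Φ)
    (hΨ : ∀ s : Ω → ℝ≥0, Measurable s → IsAERandomConjugateAt P Φ s (Ψ s)) {t : Ω → ℝ≥0}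
    (ht : Measurable t) {v : Ω → ℝ≥0∞}
    (hv : ∀ s : Ω → ℝ≥0, Measurable s →
      (fun ω => ((s ω * t ω : ℝ≥0) : ℝ≥0∞) - Ψ s ω) ≤ᵐ[P] v)
    {r : ℝ≥0} (hr : r < 1) :
    Φ (fun ω => r * t ω) ≤ᵐ[P] v := by
  obtain ⟨q, hrq, hq⟩ := exists_between hr
  have ha : Measurable fun ω => r * t ω := ht.const_mul r
  have hb : Measurable fun ω => q * t ω := ht.const_mul q
  filter_upwards [hΦ.ae_apply_le_of_lt_of_ne_top hΨ hv ha hb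
      fun ω => mul_le_of_le_one_left zero_le hq.le,
    hΦ.ae_eq_top_of_lt_of_eq_top hΨ ht hv hb, hΦ.ae_le_of_le ha measurable_zero, hΦ.2.2.1]
    with ω hfin htop hzero h0
  rcases eq_zero_or_pos (t ω) with h | h
  · calc Φ (fun ω => r * t ω) ω ≤ Φ 0 ω := hzero (by simp [h])
      _ = 0 := h0
      _ ≤ v ω := zero_le
  · by_cases hb_top : Φ (fun ω => q * t ω) ω = ⊤
    · rw [htop (mul_lt_of_lt_one_left h hq) hb_top]
      exact le_top
    · exact hfin (mul_lt_mul_of_pos_right hrq h) hb_top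

end IsRandomOrlicz

/-- the random conjugate of the random conjugate of a random Orlicz
function `Φ` is `Φ` itself: for every `t ∈ L⁰₊(ℱ)`, the a.e. least upper bound of the
family `{ t·s ∸ Ψ(s) : s ∈ L⁰₊(ℱ) }` exists and equals `Φ(t)` a.e. -/
theorem random_biconjugate_eq_self
    {Ω : Type*} [MeasurableSpace Ω] (P : Measure Ω) [IsProbabilityMeasure P]
    (Φ : (Ω → ℝ≥0) → Ω → ℝ≥0∞) (hΦ : IsRandomOrlicz P Φ)
    (Ψ : (Ω → ℝ≥0) → Ω → ℝ≥0∞)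
    (hΨ : ∀ s : Ω → ℝ≥0, Measurable s → IsAERandomConjugateAt P Φ s (Ψ s)) :
    ∀ t : Ω → ℝ≥0, Measurable t → IsAERandomConjugateAt P Ψ t (Φ t) := by
  intro t ht
  refine ⟨hΦ.2.1 t ht, fun s hs => ?_, fun v _ hv => ?_⟩
  · filter_upwards [(hΨ s hs).2.1 t ht] with ω h
    rw [mul_comm]
    exact tsub_le_iff_tsub_le.1 h
  obtain ⟨r, hr_mono, hr_mem, hr_lim⟩ := exists_seq_strictMono_tendsto' (zero_lt_one' ℝ≥0)
  set ts : ℕ → Ω → ℝ≥0 := fun n ω => r n * t ω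
  have hts : ∀ n, Measurable (ts n) := fun n => ht.const_mul _
  have hts_lim : TendstoInMeasure P ts atTop t :=
    tendstoInMeasure_of_tendsto_ae (fun n => (hts n).aestronglyMeasurable)
      (.of_forall fun ω => by simpa using hr_lim.mul_const (t ω))
  exact ae_le_of_tendsto_of_forall_ae_le
    (fun n => hΦ.ae_apply_const_mul_le hΨ ht hv (hr_mem n).2)
    (hΦ.2.2.2.1 t ht ts hts
      (fun n => .of_forall fun ω => mul_le_mul_left (hr_mono.monotone n.le_succ) _)
      (fun n => .of_forall fun ω => mul_le_of_le_one_left zero_le (hr_mem n).2.le) hts_lim)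
end
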